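/- arXiv:1912.13225 — 2 statements merged into one kernel-verified Lean document; each statement's English description precedes it below -/
import Mathlib

section
/- (Spectral estimate for the GenEO preconditioner with inexact coarse solve) Assume: ∑_{i=1}^N R_iᵀ D_i R_i = I; each R_i A R_iᵀ is symmetric positive definite; ‖∑_{i=1}^N R_iᵀ U_i‖_A² ≤ k₀ ∑_{i=1}^N ‖R_iᵀ U_i‖_A² for all U_i; there are linear maps π̃_j : ℝ^{n_j} → ℝ^{n_j} with range(R_jᵀ D_j π̃_j) ⊆ V₀ and ∑_{j=1}^N ⟨R_j A R_jᵀ D_j (I − π̃_j) R_j U, D_j (I − π̃_j) R_j U⟩ ≤ k₁ τ ⟨A U, U⟩ for all U; and μ′ ⟨Ẽ u, u⟩ ≤ ⟨E u, u⟩ ≤ μ ⟨Ẽ u, u⟩ for all u ∈ ℝᵐ, with μ, μ′ > 0. Set ε_A := ‖P₀ − P̃₀‖_A, c_T := μ′ / ( (1 + ε_A √(k₀ k₁ τ))² + μ′ k₁ τ ), c_R := [ k₀ (1 + ε_A²) + μ + √( (k₀ (1 + ε_A²) − μ)² + 4 μ k₀ ε_A² ) ] / 2, and define M⁻¹ :=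 Z Ẽ⁻¹ Zᵀ + (I − P̃₀) ( ∑_{i=1}^N R_iᵀ (R_i A R_iᵀ)⁻¹ R_i ) (I − P̃₀ᵀ). Then every eigenvalue λ of M⁻¹ A (i.e., every λ ∈ ℝ such that M⁻¹ A U = λ U for some U ≠ 0) satisfies c_T ≤ λ ≤ c_R. -/
/-!
With `w = A U`, the eigen-equation gives `λ ‖U‖²_A = ⟨M⁻¹ w, w⟩`, and this quadratic form splits
as `⟨Ẽ⁻¹ Zᵀ w, Zᵀ w⟩ + ∑ ⟨(Rᵢ A Rᵢᵀ)⁻¹ Rᵢ v, Rᵢ v⟩` with `v = (I - P̃₀)ᵀ w = A (I - P̃₀) U`.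

Upper bound: the coarse term is at most `μ ‖P₀ U‖²_A` by the spectral equivalence, and the local
term at most `k₀ ‖(I - P̃₀) U‖²_A` by the one-level additive Schwarz estimate. As `P₀ - P̃₀` kills
the `A`-orthogonal complement of `V₀` and maps into `V₀`,
`‖(I - P̃₀) U‖²_A ≤ ‖(I - P₀) U‖²_A + ε_A² ‖P₀ U‖²_A`, and `c_R` dominates `μ + k₀ ε_A²` and `k₀`.

Lower bound: the GenEO splitting `U = z + ∑ Rⱼᵀ Dⱼ (I - π̃ⱼ) Rⱼ U` with `z ∈ V₀` is rewritten as
`U = Z W₀ + (I - P̃₀)(U - z)`, where `‖Z W₀‖_A ≤ (1 + ε_A √(k₀ k₁ τ)) ‖U‖_A`. Cauchy–Schwarz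
(Lions' lemma) bounds `‖U‖⁴_A` by `λ ‖U‖²_A` times the energy of this splitting.
-/

open Matrix

/-- The norm induced by an SPD matrix `A`: `‖x‖_A = √(⟨A x, x⟩)`. -/
noncomputable def aNorm {n : ℕ} (A : Matrix (Fin n) (Fin n) ℝ) (x : Fin n → ℝ) : ℝ :=
  Real.sqrt ((A *ᵥ x) ⬝ᵥ x)

/-- The operator norm of a matrix `M` induced by the `A`-norm. -/
noncomputable def aOpNorm {n : ℕ} (A M : Matrix (Fin n) (Fin n) ℝ) : ℝ :=
  sSup { t : ℝ | ∃ x : Fin n → ℝ, x ≠ 0 ∧ t = aNorm A (M *ᵥ x) / aNorm A x }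

theorem le_of_sq_le_mul {a c : ℝ} (hc : 0 ≤ c) (h : a ^ 2 ≤ c * a) : a ≤ c := by
  rcases le_or_gt a 0 with ha | ha
  · exact ha.trans hc
  · nlinarith

theorem add_sq_le_add_mul_add {a b p q r s : ℝ} (hp : 0 ≤ p) (hq : 0 ≤ q) (hr : 0 ≤ r)
    (hs : 0 ≤ s) (ha : a ^ 2 ≤ p * r) (hb : b ^ 2 ≤ q * s) : (a + b) ^ 2 ≤ (p + q) * (r + s) := by
  simpa [Fin.sum_univ_two] using Finset.sum_sq_le_sum_mul_sum_of_sq_le_mul Finset.univ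
    (r := ![a, b]) (f := ![p, q]) (g := ![r, s]) (by simp [Fin.forall_fin_two, hp, hq])
    (by simp [Fin.forall_fin_two, hr, hs]) (by simp [Fin.forall_fin_two, ha, hb])

namespace Matrix

variable {ι κ : Type*} [Fintype ι] [Fintype κ]

theorem mulVec_dotProduct_eq_dotProduct_transpose_mulVec {S : Type*} [CommSemiring S]
    (X : Matrix ι κ S) (u : κ → S) (w : ι → S) : (X *ᵥ u) ⬝ᵥ w = u ⬝ᵥ (Xᵀ *ᵥ w) := by
  rw [dotProduct_comm, dotProduct_mulVec, ← mulVec_transpose, dotProduct_comm]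

theorem mul_mul_transpose_mulVec_dotProduct {S : Type*} [CommSemiring S]
    (X : Matrix ι κ S) (Y : Matrix κ κ S) (w : ι → S) :
    ((X * Y * Xᵀ) *ᵥ w) ⬝ᵥ w = (Y *ᵥ (Xᵀ *ᵥ w)) ⬝ᵥ (Xᵀ *ᵥ w) := by
  rw [← mulVec_mulVec, ← mulVec_mulVec, mulVec_dotProduct_eq_dotProduct_transpose_mulVec,
    dotProduct_comm]

theorem IsHermitian.mulVec_dotProduct_comm {A : Matrix ι ι ℝ} (hA : A.IsHermitian)
    (x y : ι → ℝ) : (A *ᵥ x) ⬝ᵥ y = (A *ᵥ y) ⬝ᵥ x := by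
  rw [mulVec_dotProduct_eq_dotProduct_transpose_mulVec, (isHermitian_iff_isSymm.mp hA).eq,
    dotProduct_comm]

theorem IsHermitian.mulVec_add_dotProduct_add {A : Matrix ι ι ℝ} (hA : A.IsHermitian)
    {x y : ι → ℝ} (hxy : (A *ᵥ x) ⬝ᵥ y = 0) :
    (A *ᵥ (x + y)) ⬝ᵥ (x + y) = (A *ᵥ x) ⬝ᵥ x + (A *ᵥ y) ⬝ᵥ y := by
  rw [mulVec_add, add_dotProduct, dotProduct_add, dotProduct_add,
    hA.mulVec_dotProduct_comm y x, hxy]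
  ring

theorem PosSemidef.mulVec_dotProduct_self_nonneg {A : Matrix ι ι ℝ} (hA : A.PosSemidef)
    (x : ι → ℝ) : 0 ≤ (A *ᵥ x) ⬝ᵥ x := by
  simpa [dotProduct_comm] using hA.dotProduct_mulVec_nonneg x

theorem PosDef.mulVec_dotProduct_self_pos {A : Matrix ι ι ℝ} (hA : A.PosDef) {x : ι → ℝ}
    (hx : x ≠ 0) : 0 < (A *ᵥ x) ⬝ᵥ x := by
  simpa [dotProduct_comm] using hA.dotProduct_mulVec_pos hx

theorem PosSemidef.sq_mulVec_dotProduct_le {A : Matrix ι ι ℝ} (hA : A.PosSemidef)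
    (x y : ι → ℝ) : ((A *ᵥ x) ⬝ᵥ y) ^ 2 ≤ ((A *ᵥ x) ⬝ᵥ x) * ((A *ᵥ y) ⬝ᵥ y) := by
  let := A.toSeminormedAddCommGroup hA
  let := A.toInnerProductSpace hA
  rw [sq, mul_comm ((A *ᵥ x) ⬝ᵥ x)]
  exact real_inner_mul_inner_self_le y x

variable [DecidableEq ι]

theorem PosDef.mulVec_inv_mulVec {A : Matrix ι ι ℝ} (hA : A.PosDef) (x : ι → ℝ) :
    A *ᵥ (A⁻¹ *ᵥ x) = x := by
  rw [mulVec_mulVec, mul_nonsing_inv _ ((isUnit_iff_isUnit_det _).mp hA.isUnit), one_mulVec]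

theorem PosDef.inv_mulVec_mulVec {A : Matrix ι ι ℝ} (hA : A.PosDef) (x : ι → ℝ) :
    A⁻¹ *ᵥ (A *ᵥ x) = x := by
  rw [mulVec_mulVec, nonsing_inv_mul _ ((isUnit_iff_isUnit_det _).mp hA.isUnit), one_mulVec]

theorem PosDef.sq_dotProduct_le_inv_mulVec_dotProduct_mul {A : Matrix ι ι ℝ} (hA : A.PosDef)
    (x y : ι → ℝ) : (x ⬝ᵥ y) ^ 2 ≤ ((A⁻¹ *ᵥ x) ⬝ᵥ x) * ((A *ᵥ y) ⬝ᵥ y) := by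
  have h := hA.posSemidef.sq_mulVec_dotProduct_le (A⁻¹ *ᵥ x) y
  rwa [hA.mulVec_inv_mulVec, dotProduct_comm x (A⁻¹ *ᵥ x)] at h

theorem PosDef.inv_mulVec_dotProduct_le {E F : Matrix ι ι ℝ} (hE : E.PosDef) (hF : F.PosDef)
    {μ : ℝ} (hμ : 0 ≤ μ) (h : ∀ u, (E *ᵥ u) ⬝ᵥ u ≤ μ * ((F *ᵥ u) ⬝ᵥ u)) (u : ι → ℝ) :
    (F⁻¹ *ᵥ u) ⬝ᵥ u ≤ μ * ((E⁻¹ *ᵥ u) ⬝ᵥ u) := by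
  have hG := hE.inv.posSemidef.mulVec_dotProduct_self_nonneg u
  refine le_of_sq_le_mul (mul_nonneg hμ hG) ?_
  have hq := h (F⁻¹ *ᵥ u)
  rw [hF.mulVec_inv_mulVec, dotProduct_comm u] at hq
  calc ((F⁻¹ *ᵥ u) ⬝ᵥ u) ^ 2
      ≤ ((E⁻¹ *ᵥ u) ⬝ᵥ u) * ((E *ᵥ (F⁻¹ *ᵥ u)) ⬝ᵥ (F⁻¹ *ᵥ u)) := by
        simpa [dotProduct_comm u] using
          hE.sq_dotProduct_le_inv_mulVec_dotProduct_mul u (F⁻¹ *ᵥ u)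
    _ ≤ ((E⁻¹ *ᵥ u) ⬝ᵥ u) * (μ * ((F⁻¹ *ᵥ u) ⬝ᵥ u)) := mul_le_mul_of_nonneg_left hq hG
    _ = μ * ((E⁻¹ *ᵥ u) ⬝ᵥ u) * ((F⁻¹ *ᵥ u) ⬝ᵥ u) := by ring

end Matrix

theorem LinearMap.exists_norm_apply_le {E : Type*} [NormedAddCommGroup E] [NormedSpace ℝ E]
    [FiniteDimensional ℝ E] (f : E →ₗ[ℝ] E) : ∃ C, ∀ x, ‖f x‖ ≤ C * ‖x‖ :=
  ⟨_, (LinearMap.toContinuousLinearMap f).le_opNorm⟩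

section ANorm

variable {n : ℕ} {A : Matrix (Fin n) (Fin n) ℝ}

theorem aNorm_sq (hA : A.PosSemidef) (x : Fin n → ℝ) : aNorm A x ^ 2 = (A *ᵥ x) ⬝ᵥ x :=
  Real.sq_sqrt (hA.mulVec_dotProduct_self_nonneg x)

theorem aNorm_pos (hA : A.PosDef) {x : Fin n → ℝ} (hx : x ≠ 0) : 0 < aNorm A x :=
  Real.sqrt_pos.mpr (hA.mulVec_dotProduct_self_pos hx)

theorem aNorm_sub_le (hA : A.PosSemidef) (x y : Fin n → ℝ) :
    aNorm A (x - y) ≤ aNorm A x + aNorm A y :=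
  @norm_sub_le _ (A.toSeminormedAddCommGroup hA).toSeminormedAddGroup x y

theorem exists_aNorm_mulVec_le (hA : A.PosDef) (M : Matrix (Fin n) (Fin n) ℝ) :
    ∃ C, ∀ x, aNorm A (M *ᵥ x) ≤ C * aNorm A x :=
  @LinearMap.exists_norm_apply_le _ (A.toNormedAddCommGroup hA)
    (A.toInnerProductSpace hA.posSemidef).toNormedSpace _ (toLin' M)

theorem aOpNorm_nonneg (M : Matrix (Fin n) (Fin n) ℝ) : 0 ≤ aOpNorm A M :=
  Real.sSup_nonneg fun _ ⟨_, _, ht⟩ => ht ▸ div_nonneg (Real.sqrt_nonneg _) (Real.sqrt_nonneg _)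

theorem aNorm_mulVec_le (hA : A.PosDef) (M : Matrix (Fin n) (Fin n) ℝ) (x : Fin n → ℝ) :
    aNorm A (M *ᵥ x) ≤ aOpNorm A M * aNorm A x := by
  obtain ⟨C, hC⟩ := exists_aNorm_mulVec_le hA M
  rcases eq_or_ne x 0 with rfl | hx
  · simp [aNorm]
  rw [← div_le_iff₀ (aNorm_pos hA hx)]
  refine le_csSup ⟨C, ?_⟩ ⟨x, hx, rfl⟩
  rintro _ ⟨y, hy, rfl⟩
  exact (div_le_iff₀ (aNorm_pos hA hy)).mpr (hC y)

theorem mulVec_dotProduct_le_aOpNorm_sq (hA : A.PosDef) (M : Matrix (Fin n) (Fin n) ℝ)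
    (x : Fin n → ℝ) : (A *ᵥ (M *ᵥ x)) ⬝ᵥ (M *ᵥ x) ≤ aOpNorm A M ^ 2 * ((A *ᵥ x) ⬝ᵥ x) := by
  rw [← aNorm_sq hA.posSemidef, ← aNorm_sq hA.posSemidef, ← mul_pow]
  exact pow_le_pow_left₀ (Real.sqrt_nonneg _) (aNorm_mulVec_le hA M x) 2

end ANorm

section AdditiveSchwarz

variable {V ι : Type*} [Fintype V] [Fintype ι] {κ : ι → Type*} [∀ i, Fintype (κ i)]
  {A : Matrix V V ℝ} {R : ∀ i, Matrix (κ i) V ℝ}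

theorem sum_mulVec_transpose_dotProduct_eq (A : Matrix V V ℝ) (u : ∀ i, κ i → ℝ) :
    ∑ i, (A *ᵥ ((R i)ᵀ *ᵥ u i)) ⬝ᵥ ((R i)ᵀ *ᵥ u i) = ∑ i, ((R i * A * (R i)ᵀ) *ᵥ u i) ⬝ᵥ u i :=
  Finset.sum_congr rfl fun i _ => (mul_mul_transpose_mulVec_dotProduct (R i) A (u i)).symm

variable [∀ i, DecidableEq (κ i)]

/-- The upper estimate of one-level additive Schwarz. -/
theorem sum_inv_mulVec_dotProduct_le (hA : A.PosSemidef) (hRAR : ∀ i, (R i * A * (R i)ᵀ).PosDef)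
    {k₀ : ℝ} (hk₀ : 0 ≤ k₀)
    (hstable : ∀ u : ∀ i, κ i → ℝ, (A *ᵥ ∑ i, (R i)ᵀ *ᵥ u i) ⬝ᵥ (∑ i, (R i)ᵀ *ᵥ u i)
      ≤ k₀ * ∑ i, (A *ᵥ ((R i)ᵀ *ᵥ u i)) ⬝ᵥ ((R i)ᵀ *ᵥ u i))
    (y : V → ℝ) :
    ∑ i, ((R i * A * (R i)ᵀ)⁻¹ *ᵥ (R i *ᵥ (A *ᵥ y))) ⬝ᵥ (R i *ᵥ (A *ᵥ y))
      ≤ k₀ * ((A *ᵥ y) ⬝ᵥ y) := by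
  set u : ∀ i, κ i → ℝ := fun i => (R i * A * (R i)ᵀ)⁻¹ *ᵥ (R i *ᵥ (A *ᵥ y))
  set s := ∑ i, (R i)ᵀ *ᵥ u i
  set T := ∑ i, u i ⬝ᵥ (R i *ᵥ (A *ᵥ y))
  have hT_local : T = ∑ i, (A *ᵥ ((R i)ᵀ *ᵥ u i)) ⬝ᵥ ((R i)ᵀ *ᵥ u i) := by
    rw [sum_mulVec_transpose_dotProduct_eq]
    refine Finset.sum_congr rfl fun i _ => ?_
    rw [(hRAR i).mulVec_inv_mulVec, dotProduct_comm]
  have hT_global : T = (A *ᵥ y) ⬝ᵥ s := by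
    rw [dotProduct_sum]
    refine Finset.sum_congr rfl fun i _ => ?_
    rw [dotProduct_comm, mulVec_dotProduct_eq_dotProduct_transpose_mulVec]
  refine le_of_sq_le_mul (mul_nonneg hk₀ (hA.mulVec_dotProduct_self_nonneg y)) ?_
  calc T ^ 2 ≤ ((A *ᵥ y) ⬝ᵥ y) * ((A *ᵥ s) ⬝ᵥ s) := by
        rw [hT_global]; exact hA.sq_mulVec_dotProduct_le y s
    _ ≤ ((A *ᵥ y) ⬝ᵥ y) * (k₀ * T) := by
        rw [hT_local]
        exact mul_le_mul_of_nonneg_left (hstable u) (hA.mulVec_dotProduct_self_nonneg y)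
    _ = k₀ * ((A *ᵥ y) ⬝ᵥ y) * T := by ring

end AdditiveSchwarz

section CoarseSpace

variable {V W : Type*} [Fintype V] [Fintype W] {A : Matrix V V ℝ} {Z : Matrix V W ℝ}

theorem mul_mul_transpose_mul_mulVec (Z : Matrix V W ℝ) (K : Matrix W W ℝ) (A : Matrix V V ℝ)
    (x : V → ℝ) : (Z * K * Zᵀ * A) *ᵥ x = Z *ᵥ (K *ᵥ (Zᵀ *ᵥ (A *ᵥ x))) := by
  simp only [mulVec_mulVec, Matrix.mul_assoc]

theorem transpose_mulVec_mulVec_mulVec (Z : Matrix V W ℝ) (A : Matrix V V ℝ) (γ : W → ℝ) :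
    Zᵀ *ᵥ (A *ᵥ (Z *ᵥ γ)) = (Zᵀ * A * Z) *ᵥ γ := by
  simp only [mulVec_mulVec, Matrix.mul_assoc]

theorem mulVec_mulVec_dotProduct_eq_zero (hA : A.IsHermitian) {y : V → ℝ}
    (hy : Zᵀ *ᵥ (A *ᵥ y) = 0) (γ : W → ℝ) : (A *ᵥ (Z *ᵥ γ)) ⬝ᵥ y = 0 := by
  rw [hA.mulVec_dotProduct_comm, dotProduct_comm, mulVec_dotProduct_eq_dotProduct_transpose_mulVec,
    hy, dotProduct_zero]

variable [DecidableEq W]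

-- `Z * (Zᵀ * A * Z)⁻¹ * Zᵀ * A` is the `A`-orthogonal projection `P₀` onto `V₀ = range Z`.
theorem coarseProj_mulVec_mulVec (hE : (Zᵀ * A * Z).PosDef) (γ : W → ℝ) :
    (Z * (Zᵀ * A * Z)⁻¹ * Zᵀ * A) *ᵥ (Z *ᵥ γ) = Z *ᵥ γ := by
  rw [mul_mul_transpose_mul_mulVec, transpose_mulVec_mulVec_mulVec, hE.inv_mulVec_mulVec]

theorem transpose_mulVec_mulVec_sub_coarseProj (hE : (Zᵀ * A * Z).PosDef) (x : V → ℝ) :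
    Zᵀ *ᵥ (A *ᵥ (x - (Z * (Zᵀ * A * Z)⁻¹ * Zᵀ * A) *ᵥ x)) = 0 := by
  rw [mulVec_sub, mulVec_sub, mul_mul_transpose_mul_mulVec, transpose_mulVec_mulVec_mulVec,
    hE.mulVec_inv_mulVec, sub_self]

theorem mul_mul_transpose_mul_mulVec_sub_coarseProj (hE : (Zᵀ * A * Z).PosDef)
    (K : Matrix W W ℝ) (x : V → ℝ) :
    (Z * K * Zᵀ * A) *ᵥ (x - (Z * (Zᵀ * A * Z)⁻¹ * Zᵀ * A) *ᵥ x) = 0 := by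
  rw [mul_mul_transpose_mul_mulVec, transpose_mulVec_mulVec_sub_coarseProj hE, mulVec_zero,
    mulVec_zero]

theorem coarseProj_pythagoras (hE : (Zᵀ * A * Z).PosDef) (hA : A.IsHermitian) (x : V → ℝ) :
    (A *ᵥ x) ⬝ᵥ x = (A *ᵥ ((Z * (Zᵀ * A * Z)⁻¹ * Zᵀ * A) *ᵥ x)) ⬝ᵥ
        ((Z * (Zᵀ * A * Z)⁻¹ * Zᵀ * A) *ᵥ x)
      + (A *ᵥ (x - (Z * (Zᵀ * A * Z)⁻¹ * Zᵀ * A) *ᵥ x)) ⬝ᵥ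
        (x - (Z * (Zᵀ * A * Z)⁻¹ * Zᵀ * A) *ᵥ x) := by
  rw [← hA.mulVec_add_dotProduct_add, add_sub_cancel]
  have h := mulVec_mulVec_dotProduct_eq_zero hA (transpose_mulVec_mulVec_sub_coarseProj hE x)
    ((Zᵀ * A * Z)⁻¹ *ᵥ (Zᵀ *ᵥ (A *ᵥ x)))
  rwa [← mul_mul_transpose_mul_mulVec] at h

theorem coarseProj_energy_eq (hE : (Zᵀ * A * Z).PosDef) (x : V → ℝ) :
    (A *ᵥ ((Z * (Zᵀ * A * Z)⁻¹ * Zᵀ * A) *ᵥ x)) ⬝ᵥ ((Z * (Zᵀ * A * Z)⁻¹ * Zᵀ * A) *ᵥ x)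
      = ((Zᵀ * A * Z)⁻¹ *ᵥ (Zᵀ *ᵥ (A *ᵥ x))) ⬝ᵥ (Zᵀ *ᵥ (A *ᵥ x)) := by
  have h := mul_mul_transpose_mulVec_dotProduct Zᵀ A ((Zᵀ * A * Z)⁻¹ *ᵥ (Zᵀ *ᵥ (A *ᵥ x)))
  rw [transpose_transpose, hE.mulVec_inv_mulVec] at h
  rw [mul_mul_transpose_mul_mulVec, ← h, dotProduct_comm]

theorem coarseProj_energy_le (hE : (Zᵀ * A * Z).PosDef) (hA : A.PosSemidef) (x : V → ℝ) :
    (A *ᵥ ((Z * (Zᵀ * A * Z)⁻¹ * Zᵀ * A) *ᵥ x)) ⬝ᵥ ((Z * (Zᵀ * A * Z)⁻¹ * Zᵀ * A) *ᵥ x)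
      ≤ (A *ᵥ x) ⬝ᵥ x := by
  rw [coarseProj_pythagoras hE hA.isHermitian x]
  exact le_add_of_nonneg_right (hA.mulVec_dotProduct_self_nonneg _)

end CoarseSpace

section TwoLevel

variable {V W ι : Type*} [Fintype V] [DecidableEq V] [Fintype W] [DecidableEq W] [Fintype ι]
  {κ : ι → Type*} [∀ i, Fintype (κ i)] [∀ i, DecidableEq (κ i)]

/-- The preconditioner `M⁻¹` of the paper, with `Et` the inexact coarse matrix `Ẽ`. -/
noncomputable def twoLevelPrecond (A : Matrix V V ℝ) (Z : Matrix V W ℝ) (Et : Matrix W W ℝ)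
    (R : ∀ i, Matrix (κ i) V ℝ) : Matrix V V ℝ :=
  Z * Et⁻¹ * Zᵀ + (1 - Z * Et⁻¹ * Zᵀ * A) * (∑ i, (R i)ᵀ * (R i * A * (R i)ᵀ)⁻¹ * R i) *
    (1 - (Z * Et⁻¹ * Zᵀ * A)ᵀ)

variable {A : Matrix V V ℝ} {Z : Matrix V W ℝ} {Et : Matrix W W ℝ} {R : ∀ i, Matrix (κ i) V ℝ}

theorem twoLevelPrecond_mulVec_dotProduct (w : V → ℝ) :
    (twoLevelPrecond A Z Et R *ᵥ w) ⬝ᵥ w = (Et⁻¹ *ᵥ (Zᵀ *ᵥ w)) ⬝ᵥ (Zᵀ *ᵥ w)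
      + ∑ i, ((R i * A * (R i)ᵀ)⁻¹ *ᵥ (R i *ᵥ ((1 - Z * Et⁻¹ * Zᵀ * A)ᵀ *ᵥ w))) ⬝ᵥ
          (R i *ᵥ ((1 - Z * Et⁻¹ * Zᵀ * A)ᵀ *ᵥ w)) := by
  have hT : (1 : Matrix V V ℝ) - (Z * Et⁻¹ * Zᵀ * A)ᵀ = (1 - Z * Et⁻¹ * Zᵀ * A)ᵀ := by
    rw [transpose_sub, transpose_one]
  rw [twoLevelPrecond, hT, add_mulVec, add_dotProduct, mul_mul_transpose_mulVec_dotProduct,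
    mul_mul_transpose_mulVec_dotProduct, sum_mulVec, sum_dotProduct]
  refine congrArg _ (Finset.sum_congr rfl fun i _ => ?_)
  have h := mul_mul_transpose_mulVec_dotProduct (R i)ᵀ (R i * A * (R i)ᵀ)⁻¹
    ((1 - Z * Et⁻¹ * Zᵀ * A)ᵀ *ᵥ w)
  rwa [transpose_transpose] at h

/-- Lions' lemma for the two-level preconditioner. -/
theorem sq_dotProduct_le_twoLevelPrecond (hEt : Et.PosDef)
    (hRAR : ∀ i, (R i * A * (R i)ᵀ).PosDef) (w : V → ℝ) {U : V → ℝ} (W₀ : W → ℝ)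
    (u : ∀ i, κ i → ℝ)
    (hU : U = Z *ᵥ W₀ + (1 - Z * Et⁻¹ * Zᵀ * A) *ᵥ ∑ i, (R i)ᵀ *ᵥ u i) :
    (w ⬝ᵥ U) ^ 2 ≤ (twoLevelPrecond A Z Et R *ᵥ w) ⬝ᵥ w *
      ((Et *ᵥ W₀) ⬝ᵥ W₀ + ∑ i, ((R i * A * (R i)ᵀ) *ᵥ u i) ⬝ᵥ u i) := by
  set v := (1 - Z * Et⁻¹ * Zᵀ * A)ᵀ *ᵥ w
  have hsplit : w ⬝ᵥ U = (Zᵀ *ᵥ w) ⬝ᵥ W₀ + ∑ i, (R i *ᵥ v) ⬝ᵥ u i := by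
    rw [hU, dotProduct_add, dotProduct_comm w, dotProduct_comm w,
      mulVec_dotProduct_eq_dotProduct_transpose_mulVec,
      mulVec_dotProduct_eq_dotProduct_transpose_mulVec, dotProduct_comm W₀, sum_dotProduct]
    refine congrArg _ (Finset.sum_congr rfl fun i _ => ?_)
    rw [mulVec_dotProduct_eq_dotProduct_transpose_mulVec, transpose_transpose, dotProduct_comm]
  rw [twoLevelPrecond_mulVec_dotProduct, hsplit]
  refine add_sq_le_add_mul_add (hEt.inv.posSemidef.mulVec_dotProduct_self_nonneg _)
    (Finset.sum_nonneg fun i _ => (hRAR i).inv.posSemidef.mulVec_dotProduct_self_nonneg _)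
    (hEt.posSemidef.mulVec_dotProduct_self_nonneg _)
    (Finset.sum_nonneg fun i _ => (hRAR i).posSemidef.mulVec_dotProduct_self_nonneg _)
    (hEt.sq_dotProduct_le_inv_mulVec_dotProduct_mul _ _) ?_
  exact Finset.sum_sq_le_sum_mul_sum_of_sq_le_mul _
    (fun i _ => (hRAR i).inv.posSemidef.mulVec_dotProduct_self_nonneg _)
    (fun i _ => (hRAR i).posSemidef.mulVec_dotProduct_self_nonneg _)
    (fun i _ => (hRAR i).sq_dotProduct_le_inv_mulVec_dotProduct_mul _ _)

end TwoLevel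

theorem exists_eq_mulVec_add_sum {V W ι : Type*} [Fintype V] [DecidableEq V] [Fintype W]
    [Fintype ι] {κ : ι → Type*} [∀ i, Fintype (κ i)] [∀ i, DecidableEq (κ i)] {Z : Matrix V W ℝ}
    {R : ∀ i, Matrix (κ i) V ℝ} {D π : ∀ i, Matrix (κ i) (κ i) ℝ}
    (hPOU : ∑ i, (R i)ᵀ * D i * R i = 1)
    (hπ : ∀ i (v : κ i → ℝ), ((R i)ᵀ * D i * π i) *ᵥ v ∈ Set.range (fun β : W → ℝ => Z *ᵥ β))
    (U : V → ℝ) :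
    ∃ γ, U = Z *ᵥ γ + ∑ i, (R i)ᵀ *ᵥ (D i *ᵥ ((1 - π i) *ᵥ (R i *ᵥ U))) := by
  choose γ hγ using fun i => hπ i (R i *ᵥ U)
  simp only at hγ
  refine ⟨∑ i, γ i, ?_⟩
  calc U = ∑ i, ((R i)ᵀ * D i * R i) *ᵥ U := by rw [← sum_mulVec, hPOU, one_mulVec]
    _ = ∑ i, (Z *ᵥ γ i + (R i)ᵀ *ᵥ (D i *ᵥ ((1 - π i) *ᵥ (R i *ᵥ U)))) := by
        refine Finset.sum_congr rfl fun i _ => ?_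
        rw [hγ i]
        simp only [mulVec_mulVec, ← add_mulVec, Matrix.mul_assoc, ← Matrix.mul_add,
          ← Matrix.add_mul, add_sub_cancel, Matrix.one_mul]
    _ = _ := by simp only [Finset.sum_add_distrib, mulVec_sum]

section InexactCoarse

variable {n : ℕ} {W : Type*} [Fintype W] [DecidableEq W] {A : Matrix (Fin n) (Fin n) ℝ}
  {Z : Matrix (Fin n) W ℝ} {Et : Matrix W W ℝ}

theorem mulVec_dotProduct_one_sub_le (hA : A.PosDef) (hE : (Zᵀ * A * Z).PosDef)
    (x : Fin n → ℝ) :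
    (A *ᵥ ((1 - Z * Et⁻¹ * Zᵀ * A) *ᵥ x)) ⬝ᵥ ((1 - Z * Et⁻¹ * Zᵀ * A) *ᵥ x)
      ≤ (A *ᵥ (x - (Z * (Zᵀ * A * Z)⁻¹ * Zᵀ * A) *ᵥ x)) ⬝ᵥ
          (x - (Z * (Zᵀ * A * Z)⁻¹ * Zᵀ * A) *ᵥ x)
        + aOpNorm A (Z * (Zᵀ * A * Z)⁻¹ * Zᵀ * A - Z * Et⁻¹ * Zᵀ * A) ^ 2 *
          ((A *ᵥ ((Z * (Zᵀ * A * Z)⁻¹ * Zᵀ * A) *ᵥ x)) ⬝ᵥ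
            ((Z * (Zᵀ * A * Z)⁻¹ * Zᵀ * A) *ᵥ x)) := by
  set P₀ := Z * (Zᵀ * A * Z)⁻¹ * Zᵀ * A
  set Pt₀ := Z * Et⁻¹ * Zᵀ * A
  -- `P₀ - P̃₀` kills `x - P₀ x` and maps into `V₀`, which is `A`-orthogonal to `x - P₀ x`.
  have hkill : (P₀ - Pt₀) *ᵥ x = (P₀ - Pt₀) *ᵥ (P₀ *ᵥ x) := by
    rw [← sub_eq_zero, ← mulVec_sub, sub_mulVec,
      mul_mul_transpose_mul_mulVec_sub_coarseProj hE,
      mul_mul_transpose_mul_mulVec_sub_coarseProj hE, sub_zero]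
  have hrange : (P₀ - Pt₀) *ᵥ x = Z *ᵥ (((Zᵀ * A * Z)⁻¹ - Et⁻¹) *ᵥ (Zᵀ *ᵥ (A *ᵥ x))) := by
    rw [sub_mulVec, mul_mul_transpose_mul_mulVec, mul_mul_transpose_mul_mulVec, sub_mulVec,
      mulVec_sub]
  have horth : (A *ᵥ (P₀ - Pt₀) *ᵥ x) ⬝ᵥ (x - P₀ *ᵥ x) = 0 := by
    rw [hrange]
    exact mulVec_mulVec_dotProduct_eq_zero hA.isHermitian
      (transpose_mulVec_mulVec_sub_coarseProj hE x) _
  have hsplit : (1 - Pt₀) *ᵥ x = (P₀ - Pt₀) *ᵥ x + (x - P₀ *ᵥ x) := by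
    rw [sub_mulVec, sub_mulVec, one_mulVec]
    abel
  rw [hsplit, hA.isHermitian.mulVec_add_dotProduct_add horth, hkill]
  have h := mulVec_dotProduct_le_aOpNorm_sq hA (P₀ - Pt₀) (P₀ *ᵥ x)
  linarith

theorem exists_coarse_correction (hA : A.PosDef) (hE : (Zᵀ * A * Z).PosDef)
    {U r : Fin n → ℝ} {γ : W → ℝ} (hU : U = Z *ᵥ γ + r) :
    ∃ W₀, U = Z *ᵥ W₀ + (1 - Z * Et⁻¹ * Zᵀ * A) *ᵥ r ∧ aNorm A (Z *ᵥ W₀)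
      ≤ aNorm A U + aOpNorm A (Z * (Zᵀ * A * Z)⁻¹ * Zᵀ * A - Z * Et⁻¹ * Zᵀ * A) * aNorm A r := by
  have hZW : Z *ᵥ (γ + Et⁻¹ *ᵥ (Zᵀ *ᵥ (A *ᵥ r))) = Z *ᵥ γ + (Z * Et⁻¹ * Zᵀ * A) *ᵥ r := by
    rw [mulVec_add, mul_mul_transpose_mul_mulVec]
  refine ⟨γ + Et⁻¹ *ᵥ (Zᵀ *ᵥ (A *ᵥ r)), ?_, ?_⟩
  · rw [hZW, sub_mulVec, one_mulVec, hU]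
    abel
  · have hP : Z *ᵥ (γ + Et⁻¹ *ᵥ (Zᵀ *ᵥ (A *ᵥ r)))
        = (Z * (Zᵀ * A * Z)⁻¹ * Zᵀ * A) *ᵥ U
          - (Z * (Zᵀ * A * Z)⁻¹ * Zᵀ * A - Z * Et⁻¹ * Zᵀ * A) *ᵥ r := by
      rw [hZW, hU, mulVec_add, coarseProj_mulVec_mulVec hE, sub_mulVec]
      abel
    rw [hP]
    exact (aNorm_sub_le hA.posSemidef _ _).trans (add_le_add
      (Real.sqrt_le_sqrt (coarseProj_energy_le hE hA.posSemidef U)) (aNorm_mulVec_le hA _ r))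

variable {ι : Type*} [Fintype ι] {κ : ι → Type*} [∀ i, Fintype (κ i)] [∀ i, DecidableEq (κ i)]
  {R : ∀ i, Matrix (κ i) (Fin n) ℝ}

theorem twoLevelPrecond_mulVec_dotProduct_le (hA : A.PosDef) (hE : (Zᵀ * A * Z).PosDef)
    (hEt : Et.PosDef) (hRAR : ∀ i, (R i * A * (R i)ᵀ).PosDef) {k₀ μ : ℝ} (hk₀ : 0 ≤ k₀)
    (hstable : ∀ u : ∀ i, κ i → ℝ, (A *ᵥ ∑ i, (R i)ᵀ *ᵥ u i) ⬝ᵥ (∑ i, (R i)ᵀ *ᵥ u i)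
      ≤ k₀ * ∑ i, (A *ᵥ ((R i)ᵀ *ᵥ u i)) ⬝ᵥ ((R i)ᵀ *ᵥ u i))
    (hμ : 0 ≤ μ) (hEμ : ∀ u, ((Zᵀ * A * Z) *ᵥ u) ⬝ᵥ u ≤ μ * ((Et *ᵥ u) ⬝ᵥ u)) (U : Fin n → ℝ) :
    (twoLevelPrecond A Z Et R *ᵥ (A *ᵥ U)) ⬝ᵥ (A *ᵥ U)
      ≤ (μ + k₀ * aOpNorm A (Z * (Zᵀ * A * Z)⁻¹ * Zᵀ * A - Z * Et⁻¹ * Zᵀ * A) ^ 2) *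
          ((A *ᵥ ((Z * (Zᵀ * A * Z)⁻¹ * Zᵀ * A) *ᵥ U)) ⬝ᵥ ((Z * (Zᵀ * A * Z)⁻¹ * Zᵀ * A) *ᵥ U))
        + k₀ * ((A *ᵥ (U - (Z * (Zᵀ * A * Z)⁻¹ * Zᵀ * A) *ᵥ U)) ⬝ᵥ
          (U - (Z * (Zᵀ * A * Z)⁻¹ * Zᵀ * A) *ᵥ U)) := by
  have hAs : Aᵀ = A := (isHermitian_iff_isSymm.mp hA.isHermitian).eq
  have hEts : (Et⁻¹)ᵀ = Et⁻¹ := by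
    rw [transpose_nonsing_inv, (isHermitian_iff_isSymm.mp hEt.isHermitian).eq]
  have hv : (1 - Z * Et⁻¹ * Zᵀ * A)ᵀ *ᵥ (A *ᵥ U) = A *ᵥ ((1 - Z * Et⁻¹ * Zᵀ * A) *ᵥ U) := by
    simp only [mulVec_mulVec, transpose_sub, transpose_one, transpose_mul, transpose_transpose,
      hAs, hEts, Matrix.sub_mul, Matrix.mul_sub, Matrix.one_mul, Matrix.mul_one, Matrix.mul_assoc]
  have hcoarse := hE.inv_mulVec_dotProduct_le hEt hμ hEμ (Zᵀ *ᵥ (A *ᵥ U))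
  rw [← coarseProj_energy_eq hE] at hcoarse
  have hlocal := sum_inv_mulVec_dotProduct_le hA.posSemidef hRAR hk₀ hstable
    ((1 - Z * Et⁻¹ * Zᵀ * A) *ᵥ U)
  have hinexact := mul_le_mul_of_nonneg_left (mulVec_dotProduct_one_sub_le (Et := Et) hA hE U) hk₀
  rw [twoLevelPrecond_mulVec_dotProduct, hv]
  linarith

theorem exists_stable_decomposition (hA : A.PosDef) (hE : (Zᵀ * A * Z).PosDef)
    {D π : ∀ i, Matrix (κ i) (κ i) ℝ} (hPOU : ∑ i, (R i)ᵀ * D i * R i = 1)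
    (hπ : ∀ i (v : κ i → ℝ), ((R i)ᵀ * D i * π i) *ᵥ v ∈ Set.range (fun β : W → ℝ => Z *ᵥ β))
    {k₀ c μ' : ℝ} (hk₀ : 0 ≤ k₀)
    (hstable : ∀ u : ∀ i, κ i → ℝ, (A *ᵥ ∑ i, (R i)ᵀ *ᵥ u i) ⬝ᵥ (∑ i, (R i)ᵀ *ᵥ u i)
      ≤ k₀ * ∑ i, (A *ᵥ ((R i)ᵀ *ᵥ u i)) ⬝ᵥ ((R i)ᵀ *ᵥ u i))
    (hGenEO : ∀ U : Fin n → ℝ,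
      ∑ i, ((R i * A * (R i)ᵀ) *ᵥ (D i *ᵥ ((1 - π i) *ᵥ (R i *ᵥ U)))) ⬝ᵥ
          (D i *ᵥ ((1 - π i) *ᵥ (R i *ᵥ U)))
        ≤ c * ((A *ᵥ U) ⬝ᵥ U))
    (hμ' : ∀ u, μ' * ((Et *ᵥ u) ⬝ᵥ u) ≤ ((Zᵀ * A * Z) *ᵥ u) ⬝ᵥ u) (U : Fin n → ℝ) :
    ∃ (W₀ : W → ℝ) (u : ∀ i, κ i → ℝ),
      U = Z *ᵥ W₀ + (1 - Z * Et⁻¹ * Zᵀ * A) *ᵥ ∑ i, (R i)ᵀ *ᵥ u i ∧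
      μ' * ((Et *ᵥ W₀) ⬝ᵥ W₀) ≤ (1 + aOpNorm A (Z * (Zᵀ * A * Z)⁻¹ * Zᵀ * A - Z * Et⁻¹ * Zᵀ * A)
          * √(k₀ * c)) ^ 2 * ((A *ᵥ U) ⬝ᵥ U) ∧
      ∑ i, ((R i * A * (R i)ᵀ) *ᵥ u i) ⬝ᵥ u i ≤ c * ((A *ᵥ U) ⬝ᵥ U) := by
  obtain ⟨γ, hγ⟩ := exists_eq_mulVec_add_sum hPOU hπ U
  set u : ∀ i, κ i → ℝ := fun i => D i *ᵥ ((1 - π i) *ᵥ (R i *ᵥ U))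
  set ε := aOpNorm A (Z * (Zᵀ * A * Z)⁻¹ * Zᵀ * A - Z * Et⁻¹ * Zᵀ * A)
  have hr : aNorm A (∑ i, (R i)ᵀ *ᵥ u i) ≤ √(k₀ * c) * aNorm A U := by
    rw [aNorm, aNorm, ← Real.sqrt_mul' _ (hA.posSemidef.mulVec_dotProduct_self_nonneg U)]
    refine Real.sqrt_le_sqrt ?_
    calc _ ≤ k₀ * ∑ i, (A *ᵥ ((R i)ᵀ *ᵥ u i)) ⬝ᵥ ((R i)ᵀ *ᵥ u i) := hstable u
      _ = k₀ * ∑ i, ((R i * A * (R i)ᵀ) *ᵥ u i) ⬝ᵥ u i := by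
        rw [sum_mulVec_transpose_dotProduct_eq]
      _ ≤ k₀ * (c * ((A *ᵥ U) ⬝ᵥ U)) := mul_le_mul_of_nonneg_left (hGenEO U) hk₀
      _ = k₀ * c * ((A *ᵥ U) ⬝ᵥ U) := by ring
  obtain ⟨W₀, hdec, hW₀⟩ := exists_coarse_correction (Et := Et) hA hE hγ
  refine ⟨W₀, u, hdec, ?_, hGenEO U⟩
  have hZW₀ : ((Zᵀ * A * Z) *ᵥ W₀) ⬝ᵥ W₀ = aNorm A (Z *ᵥ W₀) ^ 2 := by
    have h := mul_mul_transpose_mulVec_dotProduct Zᵀ A W₀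
    rwa [transpose_transpose, ← aNorm_sq hA.posSemidef] at h
  calc μ' * ((Et *ᵥ W₀) ⬝ᵥ W₀) ≤ aNorm A (Z *ᵥ W₀) ^ 2 := hZW₀ ▸ hμ' W₀
    _ ≤ (aNorm A U + ε * (√(k₀ * c) * aNorm A U)) ^ 2 :=
      pow_le_pow_left₀ (Real.sqrt_nonneg _)
        (hW₀.trans (add_le_add le_rfl (mul_le_mul_of_nonneg_left hr (aOpNorm_nonneg _)))) 2
    _ = (1 + ε * √(k₀ * c)) ^ 2 * ((A *ᵥ U) ⬝ᵥ U) := by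
      rw [← aNorm_sq hA.posSemidef U]
      ring

end InexactCoarse

-- The right-hand side is the larger eigenvalue of `!![μ + k₀ ε², k₀ ε; k₀ ε, k₀]`.
theorem max_le_upper_spectral_bound (μ k₀ ε : ℝ) :
    max (μ + k₀ * ε ^ 2) k₀
      ≤ (k₀ * (1 + ε ^ 2) + μ + √((k₀ * (1 + ε ^ 2) - μ) ^ 2 + 4 * μ * k₀ * ε ^ 2)) / 2 := by
  have h : |μ + k₀ * ε ^ 2 - k₀| ≤ √((k₀ * (1 + ε ^ 2) - μ) ^ 2 + 4 * μ * k₀ * ε ^ 2) :=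
    Real.abs_le_sqrt (by nlinarith [sq_nonneg (k₀ * ε)])
  exact max_le (by linarith [le_abs_self (μ + k₀ * ε ^ 2 - k₀)])
    (by linarith [neg_abs_le (μ + k₀ * ε ^ 2 - k₀)])

theorem le_of_mul_add_le {lam c x y a b : ℝ} (ha : 0 ≤ a) (hb : 0 ≤ b) (hab : 0 < a + b)
    (hx : x ≤ c) (hy : y ≤ c) (h : lam * (a + b) ≤ x * a + y * b) : lam ≤ c := by
  refine le_of_mul_le_mul_right ?_ hab
  linarith [mul_le_mul_of_nonneg_right hx ha, mul_le_mul_of_nonneg_right hy hb]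

theorem div_le_of_sq_le_mul {a lam e₀ e₁ C t μ' : ℝ} (ha : 0 < a) (hμ' : 0 < μ')
    (hden : 0 < C + μ' * t) (he₀ : 0 ≤ e₀) (he₁ : 0 ≤ e₁) (h : a ^ 2 ≤ lam * a * (e₀ + e₁))
    (h₀ : μ' * e₀ ≤ C * a) (h₁ : e₁ ≤ t * a) : μ' / (C + μ' * t) ≤ lam := by
  have hle : a ≤ lam * (e₀ + e₁) := le_of_mul_le_mul_left (by nlinarith) ha
  have hlam : 0 < lam := by
    by_contra! hl
    nlinarith [add_nonneg he₀ he₁]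
  rw [div_le_iff₀ hden]
  refine le_of_mul_le_mul_right ?_ ha
  linarith [mul_le_mul_of_nonneg_left hle hμ'.le, mul_le_mul_of_nonneg_left h₀ hlam.le,
    mul_le_mul_of_nonneg_left h₁ (mul_pos hlam hμ').le]

theorem stmt9_general {n m N : ℕ} (A : Matrix (Fin n) (Fin n) ℝ) (hA : A.PosDef)
    (Z : Matrix (Fin n) (Fin m) ℝ) (hZ : LinearIndependent ℝ Zᵀ)
    (Et : Matrix (Fin m) (Fin m) ℝ) (hEt : Et.PosDef)
    (nd : Fin N → ℕ)
    (R : ∀ i : Fin N, Matrix (Fin (nd i)) (Fin n) ℝ)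
    (D : ∀ i : Fin N, Matrix (Fin (nd i)) (Fin (nd i)) ℝ)
    (hRARt : ∀ i, (R i * A * (R i)ᵀ).PosDef)
    (k₀ k₁ τ μ μ' : ℝ) (hk₀ : 0 < k₀) (hk₁ : 0 < k₁) (hτ : 0 < τ)
    (hμ : 0 < μ) (hμ' : 0 < μ')
    (hPOU : ∑ i, (R i)ᵀ * D i * R i = (1 : Matrix (Fin n) (Fin n) ℝ))
    (hk₀bound : ∀ U : ∀ i : Fin N, Fin (nd i) → ℝ,
      (A *ᵥ (∑ i, (R i)ᵀ *ᵥ U i)) ⬝ᵥ (∑ i, (R i)ᵀ *ᵥ U i)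
        ≤ k₀ * ∑ i, (A *ᵥ ((R i)ᵀ *ᵥ U i)) ⬝ᵥ ((R i)ᵀ *ᵥ U i))
    (π : ∀ j : Fin N, Matrix (Fin (nd j)) (Fin (nd j)) ℝ)
    (hπV₀ : ∀ j (v : Fin (nd j) → ℝ),
      ((R j)ᵀ * D j * π j) *ᵥ v ∈ Set.range (fun β : Fin m → ℝ => Z *ᵥ β))
    (hGenEO : ∀ U : Fin n → ℝ,
      ∑ j, ((R j * A * (R j)ᵀ) *ᵥ ((D j) *ᵥ ((1 - π j) *ᵥ ((R j) *ᵥ U)))) ⬝ᵥ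
          ((D j) *ᵥ ((1 - π j) *ᵥ ((R j) *ᵥ U)))
        ≤ k₁ * τ * ((A *ᵥ U) ⬝ᵥ U))
    (hEμ : ∀ u : Fin m → ℝ,
      μ' * ((Et *ᵥ u) ⬝ᵥ u) ≤ ((Zᵀ * A * Z) *ᵥ u) ⬝ᵥ u
        ∧ ((Zᵀ * A * Z) *ᵥ u) ⬝ᵥ u ≤ μ * ((Et *ᵥ u) ⬝ᵥ u))
    (εA cT cR : ℝ)
    (hεA : εA = aOpNorm A (Z * (Zᵀ * A * Z)⁻¹ * Zᵀ * A - Z * Et⁻¹ * Zᵀ * A))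
    (hcT : cT = μ' / ((1 + εA * Real.sqrt (k₀ * k₁ * τ)) ^ 2 + μ' * k₁ * τ))
    (hcR : cR = (k₀ * (1 + εA ^ 2) + μ
        + Real.sqrt ((k₀ * (1 + εA ^ 2) - μ) ^ 2 + 4 * μ * k₀ * εA ^ 2)) / 2) :
    ∀ (lam : ℝ) (U : Fin n → ℝ), U ≠ 0 →
      ((Z * Et⁻¹ * Zᵀ
          + (1 - Z * Et⁻¹ * Zᵀ * A) * (∑ i, (R i)ᵀ * (R i * A * (R i)ᵀ)⁻¹ * R i) *
            (1 - (Z * Et⁻¹ * Zᵀ * A)ᵀ)) * A) *ᵥ U = lam • U →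
      cT ≤ lam ∧ lam ≤ cR := by
  intro lam U hU hEig
  have hE : (Zᵀ * A * Z).PosDef := by
    simpa using hA.conjTranspose_mul_mul_same (mulVec_injective_iff.mpr hZ)
  have hUU : 0 < (A *ᵥ U) ⬝ᵥ U := hA.mulVec_dotProduct_self_pos hU
  have hB : (twoLevelPrecond A Z Et R *ᵥ (A *ᵥ U)) ⬝ᵥ (A *ᵥ U) = lam * ((A *ᵥ U) ⬝ᵥ U) := by
    rw [mulVec_mulVec, twoLevelPrecond, hEig, smul_dotProduct, smul_eq_mul, dotProduct_comm U]
  constructor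
  · obtain ⟨W₀, u, hdec, hW₀, hu⟩ := exists_stable_decomposition hA hE hPOU hπV₀ hk₀.le
      hk₀bound hGenEO (fun v => (hEμ v).1) U
    have hlow := sq_dotProduct_le_twoLevelPrecond hEt hRARt (A *ᵥ U) W₀ u hdec
    rw [hB] at hlow
    rw [hcT, hεA, mul_assoc k₀, mul_assoc μ']
    exact div_le_of_sq_le_mul hUU hμ' (by positivity)
      (hEt.posSemidef.mulVec_dotProduct_self_nonneg _)
      (Finset.sum_nonneg fun i _ => (hRARt i).posSemidef.mulVec_dotProduct_self_nonneg _)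
      hlow hW₀ hu
  · have hup := twoLevelPrecond_mulVec_dotProduct_le hA hE hEt hRARt hk₀.le hk₀bound hμ.le
      (fun v => (hEμ v).2) U
    have hpy := coarseProj_pythagoras hE hA.isHermitian U
    rw [hB, ← hεA, hpy] at hup
    rw [hpy] at hUU
    have hmax := max_le_upper_spectral_bound μ k₀ εA
    rw [← hcR] at hmax
    exact le_of_mul_add_le (hA.posSemidef.mulVec_dotProduct_self_nonneg _)
      (hA.posSemidef.mulVec_dotProduct_self_nonneg _) hUU ((le_max_left _ _).trans hmax)
      ((le_max_right _ _).trans hmax) hup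

/-- Spectral estimate for the GenEO preconditioner with inexact coarse solve:
under partition of unity, SPD local matrices `R_i A R_iᵀ`, the `k₀`-bound, the GenEO bound
with maps `π̃_j` whose coarse components lie in `V₀`, and spectral equivalence
`μ′ ⟨Ẽ u, u⟩ ≤ ⟨E u, u⟩ ≤ μ ⟨Ẽ u, u⟩`, every eigenvalue `λ` of `M⁻¹ A`, where
`M⁻¹ := Z Ẽ⁻¹ Zᵀ + (I − P̃₀)(∑ R_iᵀ (R_i A R_iᵀ)⁻¹ R_i)(I − P̃₀ᵀ)`,
satisfies `c_T ≤ λ ≤ c_R`. -/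
theorem stmt9 {n m N : ℕ} (A : Matrix (Fin n) (Fin n) ℝ) (hA : A.PosDef)
    (Z : Matrix (Fin n) (Fin m) ℝ) (hZ : LinearIndependent ℝ Zᵀ)
    (Et : Matrix (Fin m) (Fin m) ℝ) (hEt : Et.PosDef)
    (nd : Fin N → ℕ)
    (R : ∀ i : Fin N, Matrix (Fin (nd i)) (Fin n) ℝ)
    (D : ∀ i : Fin N, Matrix (Fin (nd i)) (Fin (nd i)) ℝ)
    (hD : ∀ i, (D i).IsDiag)
    (hRARt : ∀ i, (R i * A * (R i)ᵀ).PosDef)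
    (k₀ k₁ τ μ μ' : ℝ) (hk₀ : 0 < k₀) (hk₁ : 0 < k₁) (hτ : 0 < τ)
    (hμ : 0 < μ) (hμ' : 0 < μ')
    (hPOU : ∑ i, (R i)ᵀ * D i * R i = (1 : Matrix (Fin n) (Fin n) ℝ))
    (hk₀bound : ∀ U : ∀ i : Fin N, Fin (nd i) → ℝ,
      (A *ᵥ (∑ i, (R i)ᵀ *ᵥ U i)) ⬝ᵥ (∑ i, (R i)ᵀ *ᵥ U i)
        ≤ k₀ * ∑ i, (A *ᵥ ((R i)ᵀ *ᵥ U i)) ⬝ᵥ ((R i)ᵀ *ᵥ U i))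
    (π : ∀ j : Fin N, Matrix (Fin (nd j)) (Fin (nd j)) ℝ)
    (hπV₀ : ∀ j (v : Fin (nd j) → ℝ),
      ((R j)ᵀ * D j * π j) *ᵥ v ∈ Set.range (fun β : Fin m → ℝ => Z *ᵥ β))
    (hGenEO : ∀ U : Fin n → ℝ,
      ∑ j, ((R j * A * (R j)ᵀ) *ᵥ ((D j) *ᵥ ((1 - π j) *ᵥ ((R j) *ᵥ U)))) ⬝ᵥ
          ((D j) *ᵥ ((1 - π j) *ᵥ ((R j) *ᵥ U)))
        ≤ k₁ * τ * ((A *ᵥ U) ⬝ᵥ U))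
    (hEμ : ∀ u : Fin m → ℝ,
      μ' * ((Et *ᵥ u) ⬝ᵥ u) ≤ ((Zᵀ * A * Z) *ᵥ u) ⬝ᵥ u
        ∧ ((Zᵀ * A * Z) *ᵥ u) ⬝ᵥ u ≤ μ * ((Et *ᵥ u) ⬝ᵥ u))
    (εA cT cR : ℝ)
    (hεA : εA = aOpNorm A (Z * (Zᵀ * A * Z)⁻¹ * Zᵀ * A - Z * Et⁻¹ * Zᵀ * A))
    (hcT : cT = μ' / ((1 + εA * Real.sqrt (k₀ * k₁ * τ)) ^ 2 + μ' * k₁ * τ))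
    (hcR : cR = (k₀ * (1 + εA ^ 2) + μ
        + Real.sqrt ((k₀ * (1 + εA ^ 2) - μ) ^ 2 + 4 * μ * k₀ * εA ^ 2)) / 2) :
    ∀ (lam : ℝ) (U : Fin n → ℝ), U ≠ 0 →
      ((Z * Et⁻¹ * Zᵀ
          + (1 - Z * Et⁻¹ * Zᵀ * A) * (∑ i, (R i)ᵀ * (R i * A * (R i)ᵀ)⁻¹ * R i) *
            (1 - (Z * Et⁻¹ * Zᵀ * A)ᵀ)) * A) *ᵥ U = lam • U →
      cT ≤ lam ∧ lam ≤ cR :=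
  stmt9_general A hA Z hZ Et hEt nd R D hRARt k₀ k₁ τ μ μ' hk₀ hk₁ hτ hμ hμ' hPOU hk₀bound π hπV₀
    hGenEO hEμ εA cT cR hεA hcT hcR
end

section
/- (Continuity estimate for the GenEO-2 preconditioner with inexact coarse solve) Assume: ‖∑_{i=1}^N R_iᵀ V_i‖_A² ≤ k₀ ∑_{i=1}^N ‖R_iᵀ V_i‖_A² for all V_i ∈ ℝ^{n_i}; ⟨E u, u⟩ ≤ μ ⟨Ẽ u, u⟩ for all u ∈ ℝᵐ for some μ > 0; and for each i = 1,…,N, B_i is a symmetric positive definite n_i×n_i matrix, W_i ⊆ ℝ^{n_i} is a subspace, and ‖R_iᵀ D_i v‖_A² ≤ γ ⟨B_i v, v⟩ for all v ∈ W_i. Let ε_A := ‖P₀ − P̃₀‖_A and c_R := [ k₀ γ (1 + ε_A²) + μ + √( (k₀ γ (1 + ε_A²) − μ)² + 4 μ k₀ γ ε_A² ) ] / 2. Then for all U₀ ∈ ℝᵐ and all U_i ∈ W_i (i = 1,…,N): ‖Z U₀ + (I − P̃₀) ∑_{i=1}^N R_iᵀ D_i U_i‖_A² ≤ c_R ( ⟨Ẽ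 U₀, U₀⟩ + ∑_{i=1}^N ⟨B_i U_i, U_i⟩ ). -/
/-!
With `w = ∑ Rᵢᵀ Dᵢ Uᵢ`, write `Z U₀ + (I - P̃₀) w = (Z U₀ + (P₀ - P̃₀) w) + (I - P₀) w`. Since `P₀`
is the `A`-orthogonal projection onto `range Z`, the two summands are `A`-orthogonal and
`‖(I - P₀) w‖_A ≤ ‖w‖_A`. Hence, with `a = ‖Z U₀‖_A` and `b = ‖w‖_A`, the left-hand side is at most
`(a + ε_A b)² + b²`, where `a² ≤ μ ⟨Ẽ U₀, U₀⟩` and `b² ≤ k₀ γ ∑ ⟨Bᵢ Uᵢ, Uᵢ⟩`. Finally `c_R` is the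
largest eigenvalue of the form `(a + ε_A b)² + b²` relative to `a² / μ + b² / (k₀ γ)`, i.e. the
larger root of `(c - μ) (c - k₀ γ (1 + ε_A²)) = μ k₀ γ ε_A²`.
-/

open Matrix

open scoped MatrixOrder

namespace Matrix

lemma IsSymm.mulVec_dotProduct_comm {ι R : Type*} [Fintype ι] [CommSemiring R]
    {M : Matrix ι ι R} (hM : M.IsSymm) (u v : ι → R) : (M *ᵥ u) ⬝ᵥ v = (M *ᵥ v) ⬝ᵥ u := by
  rw [dotProduct_comm, dotProduct_mulVec, ← mulVec_transpose, hM.eq]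

lemma PosSemidef.isSymm {ι : Type*} [Fintype ι] {A : Matrix ι ι ℝ} (hA : A.PosSemidef) :
    A.IsSymm :=
  isHermitian_iff_isSymm.1 hA.isHermitian

lemma PosDef.transpose_mul_mul_same {ι κ : Type*} [Fintype ι] [Fintype κ]
    {A : Matrix ι ι ℝ} (hA : A.PosDef) {Z : Matrix ι κ ℝ} (hZ : LinearIndependent ℝ Zᵀ) :
    (Zᵀ * A * Z).PosDef := by
  simpa only [conjTranspose_eq_transpose_of_trivial] using
    hA.conjTranspose_mul_mul_same (mulVec_injective_iff.2 hZ)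

section Projection

variable {ι κ R : Type*} [Fintype ι] [Fintype κ] [DecidableEq κ] [CommRing R]
  {A : Matrix ι ι R} {Z : Matrix ι κ R}

lemma transpose_mul_mul_projection (hE : IsUnit (Zᵀ * A * Z).det) :
    Zᵀ * A * (Z * (Zᵀ * A * Z)⁻¹ * Zᵀ * A) = Zᵀ * A := by
  calc Zᵀ * A * (Z * (Zᵀ * A * Z)⁻¹ * Zᵀ * A) = (Zᵀ * A * Z) * (Zᵀ * A * Z)⁻¹ * (Zᵀ * A) := by
        simp only [Matrix.mul_assoc]
    _ = Zᵀ * A := by rw [mul_nonsing_inv _ hE, Matrix.one_mul]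

lemma mulVec_dotProduct_one_sub_projection [DecidableEq ι] (hA : A.IsSymm)
    (hE : IsUnit (Zᵀ * A * Z).det) (c : κ → R) (w : ι → R) :
    (A *ᵥ (Z *ᵥ c)) ⬝ᵥ ((1 - Z * (Zᵀ * A * Z)⁻¹ * Zᵀ * A) *ᵥ w) = 0 := by
  rw [hA.mulVec_dotProduct_comm, dotProduct_mulVec, ← mulVec_transpose, mulVec_mulVec,
    mulVec_mulVec, Matrix.mul_sub, Matrix.mul_one, transpose_mul_mul_projection hE, sub_self,
    zero_mulVec, zero_dotProduct]

end Projection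

end Matrix

lemma aNorm_nonneg {n : ℕ} (A : Matrix (Fin n) (Fin n) ℝ) (x : Fin n → ℝ) : 0 ≤ aNorm A x :=
  Real.sqrt_nonneg _

namespace Matrix

variable {n m : ℕ} {A : Matrix (Fin n) (Fin n) ℝ}

lemma PosSemidef.aNorm_sq (hA : A.PosSemidef) (x : Fin n → ℝ) :
    aNorm A x ^ 2 = (A *ᵥ x) ⬝ᵥ x :=
  Real.sq_sqrt (dotProduct_comm x _ ▸ hA.dotProduct_mulVec_nonneg x)

lemma PosSemidef.aNorm_mulVec_sq (hA : A.PosSemidef) (Z : Matrix (Fin n) (Fin m) ℝ)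
    (u : Fin m → ℝ) : aNorm A (Z *ᵥ u) ^ 2 = ((Zᵀ * A * Z) *ᵥ u) ⬝ᵥ u := by
  rw [hA.aNorm_sq, hA.isSymm.mulVec_dotProduct_comm, dotProduct_mulVec, ← mulVec_transpose,
    mulVec_mulVec, mulVec_mulVec]

lemma PosSemidef.aNorm_eq_norm_sqrt_mulVec (hA : A.PosSemidef) (x : Fin n → ℝ) :
    aNorm A x = ‖WithLp.toLp 2 (CFC.sqrt A *ᵥ x)‖ := by
  rw [aNorm, EuclideanSpace.norm_eq]
  conv_lhs => rw [← CFC.sqrt_mul_sqrt_self A hA.nonneg, ← mulVec_mulVec,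
    (CFC.sqrt_nonneg A).posSemidef.isSymm.mulVec_dotProduct_comm]
  simp [dotProduct, sq]

lemma PosSemidef.aNorm_add_le (hA : A.PosSemidef) (u v : Fin n → ℝ) :
    aNorm A (u + v) ≤ aNorm A u + aNorm A v := by
  simpa only [hA.aNorm_eq_norm_sqrt_mulVec, mulVec_add, WithLp.toLp_add] using norm_add_le _ _

lemma PosSemidef.aNorm_add_sq_of_dotProduct_eq_zero (hA : A.PosSemidef) {u v : Fin n → ℝ}
    (h : (A *ᵥ u) ⬝ᵥ v = 0) : aNorm A (u + v) ^ 2 = aNorm A u ^ 2 + aNorm A v ^ 2 := by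
  have h' : (A *ᵥ v) ⬝ᵥ u = 0 := by rwa [hA.isSymm.mulVec_dotProduct_comm]
  simp only [hA.aNorm_sq, mulVec_add, add_dotProduct, dotProduct_add, h, h']
  ring

lemma PosSemidef.aNorm_one_sub_projection_mulVec_le {Z : Matrix (Fin n) (Fin m) ℝ}
    (hA : A.PosSemidef) (hE : IsUnit (Zᵀ * A * Z).det) (w : Fin n → ℝ) :
    aNorm A ((1 - Z * (Zᵀ * A * Z)⁻¹ * Zᵀ * A) *ᵥ w) ≤ aNorm A w := by
  set c := ((Zᵀ * A * Z)⁻¹ * Zᵀ * A) *ᵥ w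
  have hw : w = Z *ᵥ c + (1 - Z * (Zᵀ * A * Z)⁻¹ * Zᵀ * A) *ᵥ w := by
    simp only [c, sub_mulVec, one_mulVec, mulVec_mulVec, Matrix.mul_assoc]
    abel
  have hpyth := hA.aNorm_add_sq_of_dotProduct_eq_zero
    (mulVec_dotProduct_one_sub_projection hA.isSymm hE c w)
  rw [← hw] at hpyth
  exact (pow_le_pow_iff_left₀ (aNorm_nonneg _ _) (aNorm_nonneg _ _) two_ne_zero).1
    (by nlinarith [sq_nonneg (aNorm A (Z *ᵥ c))])

lemma PosDef.aNorm_pos (hA : A.PosDef) {x : Fin n → ℝ} (hx : x ≠ 0) : 0 < aNorm A x :=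
  Real.sqrt_pos.2 (dotProduct_comm x _ ▸ hA.dotProduct_mulVec_pos hx)

lemma PosDef.exists_aNorm_mulVec_le (hA : A.PosDef) (M : Matrix (Fin n) (Fin n) ℝ) :
    ∃ C, ∀ x, aNorm A (M *ᵥ x) ≤ C * aNorm A x := by
  set S := CFC.sqrt A
  have hS : IsUnit S.det :=
    (isUnit_iff_isUnit_det S).1 ((CFC.isUnit_sqrt_iff A hA.posSemidef.nonneg).2 hA.isUnit)
  -- `‖·‖_A = ‖S ·‖₂`, so `M` is bounded for `‖·‖_A` because `S M S⁻¹` is bounded for `‖·‖₂`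
  refine ⟨‖toEuclideanCLM (𝕜 := ℝ) (S * M * S⁻¹)‖, fun x => ?_⟩
  have hSM : S *ᵥ (M *ᵥ x) = (S * M * S⁻¹) *ᵥ (S *ᵥ x) := by
    rw [mulVec_mulVec, mulVec_mulVec, Matrix.mul_assoc (S * M), nonsing_inv_mul S hS, mul_one]
  rw [hA.posSemidef.aNorm_eq_norm_sqrt_mulVec, hA.posSemidef.aNorm_eq_norm_sqrt_mulVec, hSM,
    ← toEuclideanCLM_toLp]
  exact ContinuousLinearMap.le_opNorm _ _

lemma PosDef.aNorm_mulVec_le_aOpNorm (hA : A.PosDef) (M : Matrix (Fin n) (Fin n) ℝ)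
    (x : Fin n → ℝ) : aNorm A (M *ᵥ x) ≤ aOpNorm A M * aNorm A x := by
  rcases eq_or_ne x 0 with rfl | hx
  · simp [aNorm]
  obtain ⟨C, hC⟩ := hA.exists_aNorm_mulVec_le M
  rw [← div_le_iff₀ (hA.aNorm_pos hx)]
  refine le_csSup ⟨C, ?_⟩ ⟨x, hx, rfl⟩
  rintro _ ⟨y, hy, rfl⟩
  exact (div_le_iff₀ (hA.aNorm_pos hy)).2 (hC y)

lemma PosDef.aNorm_mulVec_add_one_sub_mulVec_sq_le {Z : Matrix (Fin n) (Fin m) ℝ}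
    (hA : A.PosDef) (hE : IsUnit (Zᵀ * A * Z).det) (F : Matrix (Fin m) (Fin m) ℝ)
    (u : Fin m → ℝ) (w : Fin n → ℝ) :
    aNorm A (Z *ᵥ u + (1 - Z * F⁻¹ * Zᵀ * A) *ᵥ w) ^ 2
      ≤ (aNorm A (Z *ᵥ u)
          + aOpNorm A (Z * (Zᵀ * A * Z)⁻¹ * Zᵀ * A - Z * F⁻¹ * Zᵀ * A) * aNorm A w) ^ 2
        + aNorm A w ^ 2 := by
  set P₀ := Z * (Zᵀ * A * Z)⁻¹ * Zᵀ * A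
  set c := u + (((Zᵀ * A * Z)⁻¹ - F⁻¹) * Zᵀ * A) *ᵥ w
  have hc : Z *ᵥ c = Z *ᵥ u + (P₀ - Z * F⁻¹ * Zᵀ * A) *ᵥ w := by
    simp only [c, P₀, mulVec_add, mulVec_mulVec, Matrix.mul_sub, Matrix.sub_mul,
      Matrix.mul_assoc]
  have hsplit : Z *ᵥ u + (1 - Z * F⁻¹ * Zᵀ * A) *ᵥ w = Z *ᵥ c + (1 - P₀) *ᵥ w := by
    rw [hc, sub_mulVec, sub_mulVec, sub_mulVec]
    abel
  have hc_le : aNorm A (Z *ᵥ c)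
      ≤ aNorm A (Z *ᵥ u) + aOpNorm A (P₀ - Z * F⁻¹ * Zᵀ * A) * aNorm A w := by
    rw [hc]
    exact (hA.posSemidef.aNorm_add_le _ _).trans
      (add_le_add le_rfl (hA.aNorm_mulVec_le_aOpNorm _ _))
  rw [hsplit, hA.posSemidef.aNorm_add_sq_of_dotProduct_eq_zero
    (mulVec_dotProduct_one_sub_projection hA.posSemidef.isSymm hE _ _)]
  exact add_le_add (pow_le_pow_left₀ (aNorm_nonneg _ _) hc_le 2) (pow_le_pow_left₀
    (aNorm_nonneg _ _) (hA.posSemidef.aNorm_one_sub_projection_mulVec_le hE w) 2)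

end Matrix

lemma le_and_le_and_sub_mul_sub_eq_of_eq_root {p q r c : ℝ} (hr : 0 ≤ r)
    (hc : c = (q + p + √((q - p) ^ 2 + 4 * r)) / 2) :
    p ≤ c ∧ q ≤ c ∧ (c - p) * (c - q) = r := by
  set s := √((q - p) ^ 2 + 4 * r)
  have hs : s ^ 2 = (q - p) ^ 2 + 4 * r := Real.sq_sqrt (by positivity)
  obtain ⟨h₁, h₂⟩ := abs_le.1 (Real.abs_le_sqrt (by linarith) : |q - p| ≤ s)
  refine ⟨by linarith, by linarith, ?_⟩
  rw [hc]
  linear_combination hs / 4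

lemma add_mul_sq_add_sq_le {μ K ε c a b s t : ℝ} (hμ : 0 < μ) (hK : 0 < K)
    (ha : a ^ 2 ≤ μ * s) (hb : b ^ 2 ≤ K * t)
    (hc : c = (K * (1 + ε ^ 2) + μ + √((K * (1 + ε ^ 2) - μ) ^ 2 + 4 * (μ * K * ε ^ 2))) / 2) :
    (a + ε * b) ^ 2 + b ^ 2 ≤ c * (s + t) := by
  obtain ⟨hcμ, hcK, hprod⟩ := le_and_le_and_sub_mul_sub_eq_of_eq_root (by positivity) hc
  -- AM-GM for `X = K (c - μ) a²` and `Y = μ (c - K (1 + ε²)) b²`, whose product is `(μ K ε a b)²`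
  have hX : 0 ≤ K * (c - μ) * a ^ 2 := by have := sub_nonneg.2 hcμ; positivity
  have hY : 0 ≤ μ * (c - K * (1 + ε ^ 2)) * b ^ 2 := by have := sub_nonneg.2 hcK; positivity
  have hXY : (K * (c - μ) * a ^ 2) * (μ * (c - K * (1 + ε ^ 2)) * b ^ 2)
      = (μ * K * ε * a * b) ^ 2 := by
    linear_combination (μ * K * a ^ 2 * b ^ 2) * hprod
  have hcross : 2 * (μ * K * ε * a * b)
      ≤ K * (c - μ) * a ^ 2 + μ * (c - K * (1 + ε ^ 2)) * b ^ 2 := by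
    nlinarith [sq_nonneg (K * (c - μ) * a ^ 2 - μ * (c - K * (1 + ε ^ 2)) * b ^ 2)]
  have hc0 : 0 ≤ c := hμ.le.trans hcμ
  refine le_of_mul_le_mul_left ?_ (mul_pos hμ hK)
  nlinarith [mul_le_mul_of_nonneg_left ha (mul_nonneg hc0 hK.le),
    mul_le_mul_of_nonneg_left hb (mul_nonneg hc0 hμ.le)]

theorem stmt15_general {n m N : ℕ} (A : Matrix (Fin n) (Fin n) ℝ) (hA : A.PosDef)
    (Z : Matrix (Fin n) (Fin m) ℝ) (hZ : LinearIndependent ℝ Zᵀ)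
    (Et : Matrix (Fin m) (Fin m) ℝ)
    (nd : Fin N → ℕ)
    (R : ∀ i : Fin N, Matrix (Fin (nd i)) (Fin n) ℝ)
    (D : ∀ i : Fin N, Matrix (Fin (nd i)) (Fin (nd i)) ℝ)
    (k₀ μ γ : ℝ) (hk₀ : 0 < k₀) (hμ : 0 < μ) (hγ : 0 < γ)
    (hk₀bound : ∀ V : ∀ i : Fin N, Fin (nd i) → ℝ,
      (A *ᵥ (∑ i, (R i)ᵀ *ᵥ V i)) ⬝ᵥ (∑ i, (R i)ᵀ *ᵥ V i)
        ≤ k₀ * ∑ i, (A *ᵥ ((R i)ᵀ *ᵥ V i)) ⬝ᵥ ((R i)ᵀ *ᵥ V i))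
    (hEμ : ∀ u : Fin m → ℝ, ((Zᵀ * A * Z) *ᵥ u) ⬝ᵥ u ≤ μ * ((Et *ᵥ u) ⬝ᵥ u))
    (B : ∀ i : Fin N, Matrix (Fin (nd i)) (Fin (nd i)) ℝ)
    (W : ∀ i : Fin N, Submodule ℝ (Fin (nd i) → ℝ))
    (hγbound : ∀ i, ∀ v ∈ W i,
      (A *ᵥ ((R i)ᵀ *ᵥ ((D i) *ᵥ v))) ⬝ᵥ ((R i)ᵀ *ᵥ ((D i) *ᵥ v))
        ≤ γ * (((B i) *ᵥ v) ⬝ᵥ v))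
    (εA cR : ℝ)
    (hεA : εA = aOpNorm A (Z * (Zᵀ * A * Z)⁻¹ * Zᵀ * A - Z * Et⁻¹ * Zᵀ * A))
    (hcR : cR = (k₀ * γ * (1 + εA ^ 2) + μ
        + Real.sqrt ((k₀ * γ * (1 + εA ^ 2) - μ) ^ 2 + 4 * μ * k₀ * γ * εA ^ 2)) / 2) :
    ∀ (U₀ : Fin m → ℝ) (U : ∀ i : Fin N, Fin (nd i) → ℝ), (∀ i, U i ∈ W i) →
      (A *ᵥ (Z *ᵥ U₀
          + (1 - Z * Et⁻¹ * Zᵀ * A) *ᵥ (∑ i, (R i)ᵀ *ᵥ ((D i) *ᵥ U i)))) ⬝ᵥ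
        (Z *ᵥ U₀
          + (1 - Z * Et⁻¹ * Zᵀ * A) *ᵥ (∑ i, (R i)ᵀ *ᵥ ((D i) *ᵥ U i)))
        ≤ cR * ((Et *ᵥ U₀) ⬝ᵥ U₀ + ∑ i, ((B i) *ᵥ U i) ⬝ᵥ U i) := by
  intro U₀ U hU
  set w := ∑ i, (R i)ᵀ *ᵥ ((D i) *ᵥ U i)
  have hE : IsUnit (Zᵀ * A * Z).det :=
    isUnit_iff_ne_zero.2 (hA.transpose_mul_mul_same hZ).det_pos.ne'
  have hcoarse : aNorm A (Z *ᵥ U₀) ^ 2 ≤ μ * ((Et *ᵥ U₀) ⬝ᵥ U₀) :=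
    (hA.posSemidef.aNorm_mulVec_sq Z U₀).trans_le (hEμ U₀)
  have hlocal : aNorm A w ^ 2 ≤ k₀ * γ * ∑ i, ((B i) *ᵥ U i) ⬝ᵥ U i := by
    rw [hA.posSemidef.aNorm_sq, mul_assoc, Finset.mul_sum]
    refine (hk₀bound fun i => D i *ᵥ U i).trans (mul_le_mul_of_nonneg_left ?_ hk₀.le)
    exact Finset.sum_le_sum fun i _ => hγbound i (U i) (hU i)
  rw [← hA.posSemidef.aNorm_sq]
  calc _ ≤ (aNorm A (Z *ᵥ U₀) + εA * aNorm A w) ^ 2 + aNorm A w ^ 2 :=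
        hεA ▸ hA.aNorm_mulVec_add_one_sub_mulVec_sq_le hE Et U₀ w
    _ ≤ _ := add_mul_sq_add_sq_le hμ (mul_pos hk₀ hγ) hcoarse hlocal (by rw [hcR]; ring_nf)

/-- Continuity estimate for the GenEO-2 preconditioner with inexact coarse
solve: under the `k₀`-bound, `⟨E u, u⟩ ≤ μ ⟨Ẽ u, u⟩`, and the local bounds
`‖R_iᵀ D_i v‖_A² ≤ γ ⟨B_i v, v⟩` for `v ∈ W_i`, for all `U₀` and `U_i ∈ W_i`,
`‖Z U₀ + (I − P̃₀) ∑ R_iᵀ D_i U_i‖_A² ≤ c_R (⟨Ẽ U₀, U₀⟩ + ∑ ⟨B_i U_i, U_i⟩)` with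
`c_R = [k₀ γ (1+ε_A²) + μ + √((k₀ γ (1+ε_A²) − μ)² + 4 μ k₀ γ ε_A²)]/2`,
`ε_A = ‖P₀ − P̃₀‖_A`. -/
theorem stmt15 {n m N : ℕ} (A : Matrix (Fin n) (Fin n) ℝ) (hA : A.PosDef)
    (Z : Matrix (Fin n) (Fin m) ℝ) (hZ : LinearIndependent ℝ Zᵀ)
    (Et : Matrix (Fin m) (Fin m) ℝ) (hEt : Et.PosDef)
    (nd : Fin N → ℕ)
    (R : ∀ i : Fin N, Matrix (Fin (nd i)) (Fin n) ℝ)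
    (D : ∀ i : Fin N, Matrix (Fin (nd i)) (Fin (nd i)) ℝ)
    (hD : ∀ i, (D i).IsDiag)
    (k₀ μ γ : ℝ) (hk₀ : 0 < k₀) (hμ : 0 < μ) (hγ : 0 < γ)
    (hk₀bound : ∀ V : ∀ i : Fin N, Fin (nd i) → ℝ,
      (A *ᵥ (∑ i, (R i)ᵀ *ᵥ V i)) ⬝ᵥ (∑ i, (R i)ᵀ *ᵥ V i)
        ≤ k₀ * ∑ i, (A *ᵥ ((R i)ᵀ *ᵥ V i)) ⬝ᵥ ((R i)ᵀ *ᵥ V i))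
    (hEμ : ∀ u : Fin m → ℝ, ((Zᵀ * A * Z) *ᵥ u) ⬝ᵥ u ≤ μ * ((Et *ᵥ u) ⬝ᵥ u))
    (B : ∀ i : Fin N, Matrix (Fin (nd i)) (Fin (nd i)) ℝ)
    (hB : ∀ i, (B i).PosDef)
    (W : ∀ i : Fin N, Submodule ℝ (Fin (nd i) → ℝ))
    (hγbound : ∀ i, ∀ v ∈ W i,
      (A *ᵥ ((R i)ᵀ *ᵥ ((D i) *ᵥ v))) ⬝ᵥ ((R i)ᵀ *ᵥ ((D i) *ᵥ v))
        ≤ γ * (((B i) *ᵥ v) ⬝ᵥ v))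
    (εA cR : ℝ)
    (hεA : εA = aOpNorm A (Z * (Zᵀ * A * Z)⁻¹ * Zᵀ * A - Z * Et⁻¹ * Zᵀ * A))
    (hcR : cR = (k₀ * γ * (1 + εA ^ 2) + μ
        + Real.sqrt ((k₀ * γ * (1 + εA ^ 2) - μ) ^ 2 + 4 * μ * k₀ * γ * εA ^ 2)) / 2) :
    ∀ (U₀ : Fin m → ℝ) (U : ∀ i : Fin N, Fin (nd i) → ℝ), (∀ i, U i ∈ W i) →
      (A *ᵥ (Z *ᵥ U₀
          + (1 - Z * Et⁻¹ * Zᵀ * A) *ᵥ (∑ i, (R i)ᵀ *ᵥ ((D i) *ᵥ U i)))) ⬝ᵥ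
        (Z *ᵥ U₀
          + (1 - Z * Et⁻¹ * Zᵀ * A) *ᵥ (∑ i, (R i)ᵀ *ᵥ ((D i) *ᵥ U i)))
        ≤ cR * ((Et *ᵥ U₀) ⬝ᵥ U₀ + ∑ i, ((B i) *ᵥ U i) ⬝ᵥ U i) :=
  stmt15_general A hA Z hZ Et nd R D k₀ μ γ hk₀ hμ hγ hk₀bound hEμ B W hγbound εA cR hεA hcR
end
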